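/- Let g be a real Banach space, h ⊆ g an ℝ-linear subspace, and m : g × g → g a map analytic at (0,0) with m(0,0) = 0 whose Fréchet derivative at (0,0) is the addition map (x,y) ↦ x + y. Let k ≥ 1 and let c̃, d̃ : ℝ → g be analytic at 0 with c̃(0) ∈ h and d̃(0) ∈ h. Then there exists a map ẽ : ℝ → g analytic at 0 with ẽ(0) = c̃(0) + d̃(0) (in particular ẽ(0) ∈ h) such that m(ε^k·c̃(ε), ε^k·d̃(ε)) = ε^k·ẽ(ε) for all ε in a neighbourhood of 0. -/

import Mathlib

/-!
Write `m (ε^k • c̃ ε, ε^k • d̃ ε) = m (ε^k • w ε)` with `w = (c̃, d̃)`. Since `m 0 = 0` and `m` is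
differentiable at `0`, the rescaled values `ε^{-k} • m (ε^k • w ε)` tend to `Dm(0) (w 0) = c̃ 0 + d̃ 0`.
An analytic function of one variable whose quotient by `ε^k` has a limit at `0` is `ε^k` times an
analytic function (divide out one factor `ε` at a time with `dslope`), whose value at `0` is that
limit.
-/

open Filter Topology

section

variable {𝕜 E F : Type*} [NontriviallyNormedField 𝕜] [NormedAddCommGroup E] [NormedSpace 𝕜 E]
  [NormedAddCommGroup F] [NormedSpace 𝕜 F]

theorem analyticAt_dslope {f : 𝕜 → E} {a : 𝕜} (hf : AnalyticAt 𝕜 f a) :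
    AnalyticAt 𝕜 (dslope f a) a :=
  let ⟨_, hp⟩ := hf
  ⟨_, hp.has_fpower_series_dslope_fslope⟩

theorem AnalyticAt.exists_eq_pow_smul_of_tendsto {f : 𝕜 → E} (hf : AnalyticAt 𝕜 f 0) {L : E}
    {k : ℕ} (hlim : Tendsto (fun z ↦ (z ^ k)⁻¹ • f z) (𝓝[≠] 0) (𝓝 L)) :
    ∃ u : 𝕜 → E, AnalyticAt 𝕜 u 0 ∧ u 0 = L ∧ ∀ z, f z = z ^ k • u z := by
  induction k generalizing f with
  | zero =>
    refine ⟨f, hf, ?_, by simp⟩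
    exact tendsto_nhds_unique (hf.continuousAt.tendsto.mono_left nhdsWithin_le_nhds)
      (by simpa using hlim)
  | succ k ih =>
    have hf0 : f 0 = 0 := by
      have hrescaled : Tendsto (fun z : 𝕜 ↦ z ^ (k + 1) • ((z ^ (k + 1))⁻¹ • f z)) (𝓝[≠] 0)
          (𝓝 ((0 : 𝕜) ^ (k + 1) • L)) :=
        ((continuous_pow (k + 1)).tendsto 0 |>.mono_left nhdsWithin_le_nhds).smul hlim
      refine tendsto_nhds_unique (l := 𝓝[≠] 0)
        (hf.continuousAt.tendsto.mono_left nhdsWithin_le_nhds) ?_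
      refine Tendsto.congr' ?_ (by simpa using hrescaled)
      filter_upwards [self_mem_nhdsWithin] with z hz
      rw [smul_inv_smul₀ (pow_ne_zero _ hz)]
    have hlim' : Tendsto (fun z ↦ (z ^ k)⁻¹ • dslope f 0 z) (𝓝[≠] 0) (𝓝 L) := by
      refine hlim.congr' ?_
      filter_upwards [self_mem_nhdsWithin] with z hz
      rw [dslope_of_ne _ hz, slope_def_module, hf0, sub_zero, sub_zero, smul_smul, pow_succ,
        mul_inv]
    obtain ⟨u, hu, hu0, hfu⟩ := ih (analyticAt_dslope hf) hlim'
    refine ⟨u, hu, hu0, fun z ↦ ?_⟩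
    rw [← sub_smul_dslope_of_zero hf0 z, hfu, sub_zero, smul_smul, pow_succ']

theorem HasFDerivAt.tendsto_inv_pow_smul_comp_pow_smul
    {φ : E → F} {φ' : E →L[𝕜] F} (hφ : HasFDerivAt φ φ' 0) (hφ0 : φ 0 = 0) {w : 𝕜 → E}
    (hw : ContinuousAt w 0) {k : ℕ} (hk : k ≠ 0) :
    Tendsto (fun ε ↦ (ε ^ k)⁻¹ • φ (ε ^ k • w ε)) (𝓝[≠] 0) (𝓝 (φ' (w 0))) := by
  have hscaled : Tendsto (fun ε : 𝕜 ↦ ε ^ k • w ε) (𝓝[≠] 0) (𝓝 0) := by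
    have := ((continuous_pow k).tendsto 0).smul hw.tendsto
    simpa [zero_pow hk] using this.mono_left nhdsWithin_le_nhds
  have hunscaled : Tendsto (fun ε : 𝕜 ↦ (ε ^ k)⁻¹ • ε ^ k • w ε) (𝓝[≠] 0) (𝓝 (w 0)) := by
    refine Tendsto.congr' ?_ (hw.tendsto.mono_left nhdsWithin_le_nhds)
    filter_upwards [self_mem_nhdsWithin] with ε hε
    rw [inv_smul_smul₀ (pow_ne_zero _ hε)]
  simpa [hφ0] using (hasFDerivWithinAt_univ.2 hφ).lim hscaled (.of_forall fun _ ↦ trivial) hunscaled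

end

theorem bch_truncation_subgroup_step_general
    {g : Type*} [NormedAddCommGroup g] [NormedSpace ℝ g]
    (m : g × g → g)
    (hm : AnalyticAt ℝ m (0, 0))
    (hm0 : m (0, 0) = 0)
    (hderiv : fderiv ℝ m (0, 0) =
      ContinuousLinearMap.fst ℝ g g + ContinuousLinearMap.snd ℝ g g)
    (k : ℕ) (hk : 1 ≤ k)
    (ct dt : ℝ → g)
    (hct : AnalyticAt ℝ ct 0) (hdt : AnalyticAt ℝ dt 0) :
    ∃ et : ℝ → g, AnalyticAt ℝ et 0 ∧ et 0 = ct 0 + dt 0 ∧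
      ∀ᶠ ε in 𝓝 (0 : ℝ),
        m (ε ^ k • ct ε, ε ^ k • dt ε) = ε ^ k • et ε := by
  rw [Prod.mk_zero_zero] at hm hm0 hderiv
  have hk0 : k ≠ 0 := Nat.one_le_iff_ne_zero.mp hk
  have hw : AnalyticAt ℝ (fun ε ↦ (ct ε, dt ε)) 0 := hct.prod hdt
  have hF : AnalyticAt ℝ (fun ε ↦ m (ε ^ k • (ct ε, dt ε))) 0 := by
    refine AnalyticAt.comp ?_ ((analyticAt_id.pow k).smul hw)
    simpa [zero_pow hk0] using hm
  have hlim : Tendsto (fun ε : ℝ ↦ (ε ^ k)⁻¹ • m (ε ^ k • (ct ε, dt ε))) (𝓝[≠] 0)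
      (𝓝 (ct 0 + dt 0)) := by
    have hD : HasFDerivAt m (fderiv ℝ m 0) 0 := hm.differentiableAt.hasFDerivAt
    simpa [hderiv] using hD.tendsto_inv_pow_smul_comp_pow_smul hm0 hw.continuousAt hk0
  obtain ⟨et, het, het0, hFet⟩ := hF.exists_eq_pow_smul_of_tendsto hlim
  exact ⟨et, het, het0, .of_forall fun ε ↦ by simpa only [Prod.smul_mk] using hFet ε⟩

/-- Let `g` be a real Banach space, `h ⊆ g` a subspace, and
`m : g × g → g` analytic at `(0,0)` with `m(0,0) = 0` and Fréchet derivative at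
`(0,0)` equal to the addition map. For `k ≥ 1` and `c̃, d̃` analytic at `0`
with `c̃ 0, d̃ 0 ∈ h`, there is `ẽ` analytic at `0` with
`ẽ 0 = c̃ 0 + d̃ 0` and `m (ε^k • c̃ ε, ε^k • d̃ ε) = ε^k • ẽ ε` near `0`.
(Key step showing `Γ(G)_H^{(k)}` is a subgroup of the germ group.) -/
theorem bch_truncation_subgroup_step
    {g : Type*} [NormedAddCommGroup g] [NormedSpace ℝ g] [CompleteSpace g]
    (h : Submodule ℝ g)
    (m : g × g → g)
    (hm : AnalyticAt ℝ m (0, 0))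
    (hm0 : m (0, 0) = 0)
    (hderiv : fderiv ℝ m (0, 0) =
      ContinuousLinearMap.fst ℝ g g + ContinuousLinearMap.snd ℝ g g)
    (k : ℕ) (hk : 1 ≤ k)
    (ct dt : ℝ → g)
    (hct : AnalyticAt ℝ ct 0) (hdt : AnalyticAt ℝ dt 0)
    (hct0 : ct 0 ∈ h) (hdt0 : dt 0 ∈ h) :
    ∃ et : ℝ → g, AnalyticAt ℝ et 0 ∧ et 0 = ct 0 + dt 0 ∧
      ∀ᶠ ε in 𝓝 (0 : ℝ),
        m (ε ^ k • ct ε, ε ^ k • dt ε) = ε ^ k • et ε :=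
  bch_truncation_subgroup_step_general m hm hm0 hderiv k hk ct dt hct hdt
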